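/- Let m ≥ 1 and let n = 2m+1, let 0 < k < n, and let F be a pointwise-increasing family of k-element subsets of [n]. If Bob(F) holds, then both Bob(F_{m+1}^+) and Bob(F_{m+1}^-) hold; equivalently, Alice wins her F-game by opening with the middle element m+1. -/

import Mathlib

/-!
The theorem is proved together with an even-board companion by a joint induction on the board.
On `[2m+1]`: if Bob wins an increasing `F`-game, he wins `F_x^-` for all `x ≤ m+1` and `F_x^+`
for all `x ≥ m+1`. On `[2m]`: if Alice wins an increasing `G`-game, she wins `G_x^-` for all
`x ≤ m+1` and `G_x^+` for all `x ≥ m`.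

Sections at two different pivots commute after relabelling, so a player answers a move in a
section game by the corresponding move in the full game and lands in a section of a section,
which the other half of the induction controls. On the even board Alice's relabelled opening can
leave the central range; but sections of an increasing family are monotone in the pivot
(`F_x^+` grows and `F_x^-` shrinks as `x` moves right), so in that case Bob already wins the
section at `x`, and by the odd-board claim Alice wins it by opening at its centre. When a section
game is decided at once (`k = 1` or `k = n - 1`), a direct analysis of games on singletons and on
complements of singletons takes over.
-/

/-- The board `[n] = {1, …, n}` as a finite set of natural numbers. -/
def board (n : ℕ) : Finset ℕ := Finset.Icc 1 n

/-- The order-preserving relabelling of `[n] \ {x}` onto `[n-1]`: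
elements below `x` are unchanged, elements above `x` drop by one. -/
def stdElt (x r : ℕ) : ℕ := if r < x then r else r - 1

/-- Standardise a set avoiding `x`: relabel it via `stdElt x`. -/
def stdSet (x : ℕ) (S : Finset ℕ) : Finset ℕ := S.image (stdElt x)

/-- The standardised section `F_x^+ = { S \ {x} : x ∈ S ∈ F }`,
viewed as a family of subsets of `[n-1]`. -/
def secPlus (F : Set (Finset ℕ)) (x : ℕ) : Set (Finset ℕ) :=
  {T | ∃ S ∈ F, x ∈ S ∧ T = stdSet x (S.erase x)}

/-- The standardised section `F_x^- = { S ∈ F : x ∉ S }`,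
viewed as a family of subsets of `[n-1]`. -/
def secMinus (F : Set (Finset ℕ)) (x : ℕ) : Set (Finset ℕ) :=
  {T | ∃ S ∈ F, x ∉ S ∧ T = stdSet x S}

mutual
  /-- `AliceWins n k F`: Alice wins her `F`-game, where `F` is a family of
  `k`-subsets of `[n]`.  Terminal games (`k = 0` or `k = n`) are won iff `F`
  is nonempty; otherwise Alice needs a first offer `x` such that Bob wins both
  his `F_x^+`-game and his `F_x^-`-game. -/
  def AliceWins (n k : ℕ) (F : Set (Finset ℕ)) : Prop :=
    if h : k = 0 ∨ n ≤ k then F.Nonempty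
    else ∃ x ∈ board n,
      BobWins (n - 1) (k - 1) (secPlus F x) ∧ BobWins (n - 1) k (secMinus F x)
  termination_by n
  decreasing_by all_goals omega

  /-- `BobWins n k F`: Bob wins his `F`-game, where `F` is a family of
  `k`-subsets of `[n]`.  Terminal games (`k = 0` or `k = n`) are won iff `F`
  is nonempty; otherwise Bob needs, for every first offer `x`, that Alice wins
  her `F_x^+`-game or her `F_x^-`-game. -/
  def BobWins (n k : ℕ) (F : Set (Finset ℕ)) : Prop :=
    if h : k = 0 ∨ n ≤ k then F.Nonempty
    else ∀ x ∈ board n,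
      AliceWins (n - 1) (k - 1) (secPlus F x) ∨ AliceWins (n - 1) k (secMinus F x)
  termination_by n
  decreasing_by all_goals omega
end

/-- `S ⪯ T` in the pointwise order: the increasing enumerations of `S` and `T`
have the same length and are pointwise `≤`. -/
def PointwiseLE (S T : Finset ℕ) : Prop :=
  List.Forall₂ (· ≤ ·) (S.sort (· ≤ ·)) (T.sort (· ≤ ·))

/-- `F` consists of `k`-element subsets of `[n]`. -/
def IsFamilyOn (n k : ℕ) (F : Set (Finset ℕ)) : Prop :=
  ∀ S ∈ F, S ⊆ board n ∧ S.card = k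

/-- `F` is pointwise-increasing as a family of `k`-subsets of `[n]`:
it is upwards closed in the pointwise order. -/
def IsIncreasingFamily (n k : ℕ) (F : Set (Finset ℕ)) : Prop :=
  ∀ S T : Finset ℕ, S ∈ F → T ⊆ board n → T.card = k → PointwiseLE S T → T ∈ F

open Finset

def liftElt (x b : ℕ) : ℕ := if b < x then b else b + 1

def liftSet (x : ℕ) (T : Finset ℕ) : Finset ℕ := T.image (liftElt x)

lemma mem_board {n r : ℕ} : r ∈ board n ↔ 1 ≤ r ∧ r ≤ n := by
  simp [board]

lemma card_board (n : ℕ) : #(board n) = n := by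
  simp [board]

lemma stdElt_liftElt (x b : ℕ) : stdElt x (liftElt x b) = b := by
  unfold stdElt liftElt; split_ifs <;> omega

lemma liftElt_stdElt {x r : ℕ} (h : r ≠ x) : liftElt x (stdElt x r) = r := by
  unfold stdElt liftElt; split_ifs <;> omega

lemma liftElt_ne (x b : ℕ) : liftElt x b ≠ x := by
  unfold liftElt; split_ifs <;> omega

lemma liftElt_injective (x : ℕ) : Function.Injective (liftElt x) :=
  Function.LeftInverse.injective (stdElt_liftElt x)

lemma liftElt_liftElt_comm (x y b : ℕ) :
    liftElt x (liftElt (stdElt x y) b) = liftElt y (liftElt (stdElt y x) b) := by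
  unfold liftElt stdElt; split_ifs <;> omega

lemma stdElt_mem_board {n x r : ℕ} (hx : x ∈ board n) (hr : r ∈ board n) (h : r ≠ x) :
    stdElt x r ∈ board (n - 1) := by
  rw [mem_board] at *; unfold stdElt; split_ifs <;> omega

lemma liftElt_mem_board {n x b : ℕ} (hx : x ∈ board n) (hb : b ∈ board (n - 1)) :
    liftElt x b ∈ board n := by
  rw [mem_board] at *; unfold liftElt; split_ifs <;> omega

lemma exists_stdElt_eq {n x z : ℕ} (hx : x ∈ board n) (hz : z ∈ board (n - 1)) :
    ∃ y ∈ board n, y ≠ x ∧ stdElt x y = z :=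
  ⟨liftElt x z, liftElt_mem_board hx hz, liftElt_ne x z, stdElt_liftElt x z⟩

lemma mem_liftSet {x r : ℕ} {T : Finset ℕ} :
    r ∈ liftSet x T ↔ r ≠ x ∧ stdElt x r ∈ T := by
  constructor
  · intro h
    obtain ⟨b, hb, rfl⟩ := mem_image.1 h
    exact ⟨liftElt_ne x b, by rwa [stdElt_liftElt]⟩
  · rintro ⟨hr, h⟩
    exact mem_image.2 ⟨_, h, liftElt_stdElt hr⟩

lemma self_notMem_liftSet (x : ℕ) (T : Finset ℕ) : x ∉ liftSet x T := by
  simp [mem_liftSet]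

lemma card_liftSet (x : ℕ) (T : Finset ℕ) : #(liftSet x T) = #T :=
  card_image_of_injective T (liftElt_injective x)

lemma liftSet_insert (x b : ℕ) (T : Finset ℕ) :
    liftSet x (insert b T) = insert (liftElt x b) (liftSet x T) :=
  image_insert _ _ _

lemma liftSet_singleton (x b : ℕ) : liftSet x {b} = {liftElt x b} :=
  image_singleton _ _

lemma stdSet_liftSet (x : ℕ) (T : Finset ℕ) : stdSet x (liftSet x T) = T := by
  rw [stdSet, liftSet, image_image, (funext (stdElt_liftElt x) : stdElt x ∘ liftElt x = id),
    image_id]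

lemma liftSet_stdSet {x : ℕ} {S : Finset ℕ} (h : x ∉ S) : liftSet x (stdSet x S) = S := by
  rw [stdSet, liftSet, image_image]
  exact (image_congr (g := id) fun r hr => liftElt_stdElt (ne_of_mem_of_not_mem hr h)).trans
    image_id

lemma liftSet_liftSet_comm (x y : ℕ) (T : Finset ℕ) :
    liftSet x (liftSet (stdElt x y) T) = liftSet y (liftSet (stdElt y x) T) := by
  simp only [liftSet, image_image]
  exact image_congr fun b _ => liftElt_liftElt_comm x y b

lemma liftSet_subset_board_iff {n x : ℕ} {T : Finset ℕ} (hx : x ∈ board n) :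
    liftSet x T ⊆ board n ↔ T ⊆ board (n - 1) := by
  constructor
  · intro h b hb
    have := h (mem_image_of_mem (liftElt x) hb)
    rw [mem_board] at *; unfold liftElt at this; split_ifs at this <;> omega
  · rintro h _ hr
    obtain ⟨b, hb, rfl⟩ := mem_image.1 hr
    exact liftElt_mem_board hx (h hb)

lemma mem_secMinus_iff {F : Set (Finset ℕ)} {x : ℕ} {T : Finset ℕ} :
    T ∈ secMinus F x ↔ liftSet x T ∈ F := by
  constructor
  · rintro ⟨S, hS, hxS, rfl⟩
    rwa [liftSet_stdSet hxS]
  · exact fun h => ⟨_, h, self_notMem_liftSet x T, (stdSet_liftSet x T).symm⟩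

lemma mem_secPlus_iff {F : Set (Finset ℕ)} {x : ℕ} {T : Finset ℕ} :
    T ∈ secPlus F x ↔ insert x (liftSet x T) ∈ F := by
  constructor
  · rintro ⟨S, hS, hxS, rfl⟩
    rwa [liftSet_stdSet (notMem_erase x S), insert_erase hxS]
  · refine fun h => ⟨_, h, mem_insert_self x _, ?_⟩
    rw [erase_insert (self_notMem_liftSet x T), stdSet_liftSet]

lemma secMinus_secMinus_comm (F : Set (Finset ℕ)) (x y : ℕ) :
    secMinus (secMinus F x) (stdElt x y) = secMinus (secMinus F y) (stdElt y x) := by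
  ext T
  simp only [mem_secMinus_iff, liftSet_liftSet_comm x y]

lemma secPlus_secPlus_comm {F : Set (Finset ℕ)} {x y : ℕ} (hxy : x ≠ y) :
    secPlus (secPlus F x) (stdElt x y) = secPlus (secPlus F y) (stdElt y x) := by
  ext T
  simp only [mem_secPlus_iff, liftSet_insert, liftElt_stdElt hxy, liftElt_stdElt hxy.symm,
    liftSet_liftSet_comm x y, insert_comm x y]

lemma secPlus_secMinus_comm {F : Set (Finset ℕ)} {x y : ℕ} (hxy : x ≠ y) :
    secPlus (secMinus F x) (stdElt x y) = secMinus (secPlus F y) (stdElt y x) := by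
  ext T
  simp only [mem_secPlus_iff, mem_secMinus_iff, liftSet_insert, liftElt_stdElt hxy.symm,
    liftSet_liftSet_comm x y]

def tailCount (c : ℕ) (S : Finset ℕ) : ℕ := #{s ∈ S | c ≤ s}

def TailLE (S T : Finset ℕ) : Prop := ∀ c, tailCount c S ≤ tailCount c T

lemma tailCount_orderEmbOfFin {S : Finset ℕ} {k : ℕ} (h : #S = k) (i : Fin k) :
    tailCount (S.orderEmbOfFin h i) S = k - i := by
  have : {s ∈ S | S.orderEmbOfFin h i ≤ s} = (Ici i).map (S.orderEmbOfFin h).toEmbedding := by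
    ext s
    constructor
    · intro hs
      obtain ⟨hs, hi⟩ := mem_filter.1 hs
      obtain ⟨j, rfl⟩ : s ∈ Set.range (S.orderEmbOfFin h) := by simpa using hs
      simpa using hi
    · simp only [mem_map, mem_Ici, mem_filter]
      rintro ⟨j, hij, rfl⟩
      exact ⟨orderEmbOfFin_mem S h j, by simpa using hij⟩
  rw [tailCount, this, card_map, Fin.card_Ici]

lemma tailCount_lt_of_lt {S : Finset ℕ} {c s : ℕ} (hs : s ∈ S) (h : s < c) :
    tailCount c S < tailCount s S :=
  card_lt_card <| (ssubset_iff_of_subset (monotone_filter_right S fun _ _ => h.le.trans)).2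
    ⟨s, by simp [hs], by simp [h]⟩

lemma pointwiseLE_of_tailLE {S T : Finset ℕ} (hcard : #S = #T) (h : TailLE S T) :
    PointwiseLE S T := by
  rw [PointwiseLE, ← listMap_orderEmbOfFin_finRange S hcard,
    ← listMap_orderEmbOfFin_finRange T rfl,
    List.forall₂_map_left_iff, List.forall₂_map_right_iff, List.forall₂_same]
  intro i _
  by_contra! hlt
  have := h (S.orderEmbOfFin hcard i)
  rw [tailCount_orderEmbOfFin] at this
  have := tailCount_lt_of_lt (T.orderEmbOfFin_mem rfl i) hlt
  rw [tailCount_orderEmbOfFin] at this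
  omega

lemma tailCount_anti {c d : ℕ} (h : c ≤ d) (S : Finset ℕ) : tailCount d S ≤ tailCount c S :=
  card_le_card <| monotone_filter_right S fun _ _ => h.trans

lemma tailCount_pred_le (c : ℕ) (S : Finset ℕ) : tailCount (c - 1) S ≤ tailCount c S + 1 := by
  calc tailCount (c - 1) S ≤ #(insert (c - 1) {s ∈ S | c ≤ s}) := by
        refine card_le_card fun s hs => ?_
        obtain ⟨hsS, hcs⟩ := mem_filter.1 hs
        rw [mem_insert, mem_filter]
        by_cases hc : c ≤ s
        · exact .inr ⟨hsS, hc⟩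
        · exact .inl (by omega)
    _ ≤ tailCount c S + 1 := card_insert_le _ _

lemma tailCount_insert {a : ℕ} {S : Finset ℕ} (h : a ∉ S) (c : ℕ) :
    tailCount c (insert a S) = tailCount c S + if c ≤ a then 1 else 0 := by
  rw [tailCount, filter_insert]
  split_ifs
  · rw [card_insert_of_notMem (fun h' => h (mem_of_mem_filter a h'))]; rfl
  · rfl

lemma tailCount_liftSet (x c : ℕ) (T : Finset ℕ) :
    tailCount c (liftSet x T) = if c ≤ x then tailCount c T else tailCount (c - 1) T := by
  rw [tailCount, liftSet, filter_image, card_image_of_injective _ (liftElt_injective x)]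
  split_ifs with h <;>
  · congr 1
    refine filter_congr fun b _ => ?_
    unfold liftElt; split_ifs <;> omega

lemma tailCount_insert_liftSet (x c : ℕ) (T : Finset ℕ) :
    tailCount c (insert x (liftSet x T)) =
      if c ≤ x then tailCount c T + 1 else tailCount (c - 1) T := by
  rw [tailCount_insert (self_notMem_liftSet x T), tailCount_liftSet]
  split_ifs <;> rfl

lemma IsFamilyOn.secMinus {n k x : ℕ} {F : Set (Finset ℕ)} (hF : IsFamilyOn n k F)
    (hx : x ∈ board n) : IsFamilyOn (n - 1) k (secMinus F x) := by
  intro T hT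
  obtain ⟨hsub, hcard⟩ := hF _ (mem_secMinus_iff.1 hT)
  exact ⟨(liftSet_subset_board_iff hx).1 hsub, by rwa [card_liftSet] at hcard⟩

lemma IsFamilyOn.secPlus {n k x : ℕ} {F : Set (Finset ℕ)} (hF : IsFamilyOn n k F)
    (hx : x ∈ board n) : IsFamilyOn (n - 1) (k - 1) (secPlus F x) := by
  intro T hT
  obtain ⟨hsub, hcard⟩ := hF _ (mem_secPlus_iff.1 hT)
  rw [insert_subset_iff, liftSet_subset_board_iff hx] at hsub
  rw [card_insert_of_notMem (self_notMem_liftSet x T), card_liftSet] at hcard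
  exact ⟨hsub.2, by omega⟩

lemma IsFamilyOn.le_of_nonempty {n k : ℕ} {F : Set (Finset ℕ)} (hF : IsFamilyOn n k F)
    (h : F.Nonempty) : k ≤ n := by
  obtain ⟨S, hS⟩ := h
  rw [← (hF S hS).2, ← card_board n]
  exact card_le_card (hF S hS).1

lemma secMinus_nonempty_of_card_zero {n x : ℕ} {F : Set (Finset ℕ)} (hF : IsFamilyOn n 0 F)
    (h : F.Nonempty) : (secMinus F x).Nonempty := by
  obtain ⟨S, hS⟩ := h
  exact ⟨_, S, hS, by simp [card_eq_zero.1 (hF S hS).2], rfl⟩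

lemma secPlus_nonempty_of_card_eq {n x : ℕ} {F : Set (Finset ℕ)} (hF : IsFamilyOn n n F)
    (h : F.Nonempty) (hx : x ∈ board n) : (secPlus F x).Nonempty := by
  obtain ⟨S, hS⟩ := h
  have : S = board n := eq_of_subset_of_card_le (hF S hS).1 (by rw [card_board, (hF S hS).2])
  exact ⟨_, S, hS, this ▸ hx, rfl⟩

/-- The tail-count form of a pointwise-increasing family: `S ⪯ T` is replaced by
`TailLE S T`, which (unlike comparing sorted lists) commutes with the relabellings of sections. -/
structure IsUpFamily (n k : ℕ) (F : Set (Finset ℕ)) : Prop where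
  isFamilyOn : IsFamilyOn n k F
  mem_of_tailLE {S T : Finset ℕ} : S ∈ F → T ⊆ board n → #T = k → TailLE S T → T ∈ F

lemma IsIncreasingFamily.isUpFamily {n k : ℕ} {F : Set (Finset ℕ)}
    (hinc : IsIncreasingFamily n k F) (hF : IsFamilyOn n k F) : IsUpFamily n k F where
  isFamilyOn := hF
  mem_of_tailLE hS hT hTk hST :=
    hinc _ _ hS hT hTk (pointwiseLE_of_tailLE ((hF _ hS).2.trans hTk.symm) hST)

namespace IsUpFamily

variable {n k s t x y : ℕ} {F : Set (Finset ℕ)}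

lemma secMinus (hF : IsUpFamily n k F) (hx : x ∈ board n) :
    IsUpFamily (n - 1) k (secMinus F x) where
  isFamilyOn := hF.isFamilyOn.secMinus hx
  mem_of_tailLE {T T'} hT hT' hT'k hTT' := by
    rw [mem_secMinus_iff] at hT ⊢
    refine hF.mem_of_tailLE hT ((liftSet_subset_board_iff hx).2 hT') (by rwa [card_liftSet])
      fun c => ?_
    rw [tailCount_liftSet, tailCount_liftSet]
    split_ifs <;> apply hTT'

lemma secPlus (hF : IsUpFamily n k F) (hx : x ∈ board n) :
    IsUpFamily (n - 1) (k - 1) (secPlus F x) where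
  isFamilyOn := hF.isFamilyOn.secPlus hx
  mem_of_tailLE {T T'} hT hT' hT'k hTT' := by
    rw [mem_secPlus_iff] at hT ⊢
    have hk := (hF.isFamilyOn _ hT).2
    rw [card_insert_of_notMem (self_notMem_liftSet x T), card_liftSet] at hk
    refine hF.mem_of_tailLE hT (insert_subset hx ((liftSet_subset_board_iff hx).2 hT'))
      (by rw [card_insert_of_notMem (self_notMem_liftSet x T'), card_liftSet]; omega)
      fun c => ?_
    rw [tailCount_insert_liftSet, tailCount_insert_liftSet]
    split_ifs
    · exact Nat.add_le_add_right (hTT' c) 1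
    · apply hTT'

lemma secPlus_subset (hF : IsUpFamily n k F) (hx : x ∈ board n) (hy : y ∈ board n)
    (hxy : x ≤ y) : _root_.secPlus F x ⊆ _root_.secPlus F y := by
  intro T hT
  have hTb := ((hF.secPlus hx).isFamilyOn T hT).1
  rw [mem_secPlus_iff] at hT ⊢
  refine hF.mem_of_tailLE hT (insert_subset hy ((liftSet_subset_board_iff hy).2 hTb))
    ?_ fun c => ?_
  · rw [← (hF.isFamilyOn _ hT).2, card_insert_of_notMem (self_notMem_liftSet x T),
      card_insert_of_notMem (self_notMem_liftSet y T), card_liftSet, card_liftSet]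
  · rw [tailCount_insert_liftSet, tailCount_insert_liftSet]
    have := tailCount_pred_le c T
    split_ifs <;> omega

lemma secMinus_subset (hF : IsUpFamily n k F) (hx : x ∈ board n) (hy : y ∈ board n)
    (hxy : x ≤ y) : _root_.secMinus F y ⊆ _root_.secMinus F x := by
  intro T hT
  have hTb := ((hF.secMinus hy).isFamilyOn T hT).1
  rw [mem_secMinus_iff] at hT ⊢
  refine hF.mem_of_tailLE hT ((liftSet_subset_board_iff hx).2 hTb)
    (by rw [← (hF.isFamilyOn _ hT).2, card_liftSet, card_liftSet]) fun c => ?_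
  rw [tailCount_liftSet, tailCount_liftSet]
  have := tailCount_anti (Nat.sub_le c 1) T
  split_ifs <;> omega

lemma singleton_mem (hF : IsUpFamily n 1 F) (hs : {s} ∈ F) (hx : x ∈ board n) (hsx : s ≤ x) :
    {x} ∈ F := by
  refine hF.mem_of_tailLE hs (singleton_subset_iff.2 hx) (card_singleton x) fun c => ?_
  simp only [tailCount, filter_singleton]
  split_ifs <;> simp; omega

lemma erase_mem (hF : IsUpFamily n (n - 1) F) (ht : (board n).erase t ∈ F) (htb : t ∈ board n)
    (hx : x ∈ board n) (hxt : x ≤ t) : (board n).erase x ∈ F := by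
  refine hF.mem_of_tailLE ht (erase_subset x _)
    (by rw [card_erase_of_mem hx, card_board]) fun c => ?_
  have hct := tailCount_insert (notMem_erase t (board n)) c
  have hcx := tailCount_insert (notMem_erase x (board n)) c
  rw [insert_erase htb] at hct
  rw [insert_erase hx] at hcx
  split_ifs at hct hcx <;> omega

end IsUpFamily

section Game

variable {n k : ℕ} {F G : Set (Finset ℕ)}

lemma aliceWins_iff_nonempty (h : k = 0 ∨ n ≤ k) : AliceWins n k F ↔ F.Nonempty := by
  rw [AliceWins, dif_pos h]

lemma bobWins_iff_nonempty (h : k = 0 ∨ n ≤ k) : BobWins n k F ↔ F.Nonempty := by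
  rw [BobWins, dif_pos h]

lemma aliceWins_iff (hk : 0 < k) (hkn : k < n) :
    AliceWins n k F ↔ ∃ x ∈ board n,
      BobWins (n - 1) (k - 1) (secPlus F x) ∧ BobWins (n - 1) k (secMinus F x) := by
  rw [AliceWins, dif_neg (by omega)]

lemma bobWins_iff (hk : 0 < k) (hkn : k < n) :
    BobWins n k F ↔ ∀ x ∈ board n,
      AliceWins (n - 1) (k - 1) (secPlus F x) ∨ AliceWins (n - 1) k (secMinus F x) := by
  rw [BobWins, dif_neg (by omega)]

lemma secPlus_mono (h : F ⊆ G) (x : ℕ) : secPlus F x ⊆ secPlus G x :=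
  fun _ ⟨S, hS, hxS, hT⟩ => ⟨S, h hS, hxS, hT⟩

lemma secMinus_mono (h : F ⊆ G) (x : ℕ) : secMinus F x ⊆ secMinus G x :=
  fun _ ⟨S, hS, hxS, hT⟩ => ⟨S, h hS, hxS, hT⟩

lemma aliceWins_mono_and_bobWins_mono (n k : ℕ) (h : F ⊆ G) :
    (AliceWins n k F → AliceWins n k G) ∧ (BobWins n k F → BobWins n k G) := by
  induction n using Nat.strong_induction_on generalizing k F G with
  | _ n ih =>
  by_cases hterm : k = 0 ∨ n ≤ k
  · simp only [aliceWins_iff_nonempty hterm, bobWins_iff_nonempty hterm]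
    exact ⟨(·.mono h), (·.mono h)⟩
  have hk : 0 < k := by omega
  have hkn : k < n := by omega
  simp only [aliceWins_iff hk hkn, bobWins_iff hk hkn]
  constructor
  · rintro ⟨x, hx, hplus, hminus⟩
    exact ⟨x, hx, (ih _ (by omega) _ (secPlus_mono h x)).2 hplus,
      (ih _ (by omega) _ (secMinus_mono h x)).2 hminus⟩
  · intro hB x hx
    exact (hB x hx).imp (ih _ (by omega) _ (secPlus_mono h x)).1
      (ih _ (by omega) _ (secMinus_mono h x)).1

lemma BobWins.mono (hFG : F ⊆ G) (h : BobWins n k F) : BobWins n k G :=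
  (aliceWins_mono_and_bobWins_mono n k hFG).2 h

end Game

section Extreme

variable {x : ℕ} {H : Set (Finset ℕ)}

lemma singleton_mem_of_secPlus_nonempty {N : ℕ} (hH : IsFamilyOn N 1 H)
    (h : (secPlus H x).Nonempty) : {x} ∈ H := by
  obtain ⟨_, S, hS, hxS, -⟩ := h
  obtain ⟨a, rfl⟩ := card_eq_one.1 (hH S hS).2
  rwa [mem_singleton.1 hxS]

lemma erase_mem_of_secMinus_nonempty {N : ℕ} (hH : IsFamilyOn N (N - 1) H) (hx : x ∈ board N)
    (h : (secMinus H x).Nonempty) : (board N).erase x ∈ H := by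
  obtain ⟨_, S, hS, hxS, -⟩ := h
  obtain ⟨hSb, hSc⟩ := hH S hS
  have : S = (board N).erase x := eq_of_subset_of_card_le
    (fun a ha => mem_erase.2 ⟨ne_of_mem_of_not_mem ha hxS, hSb ha⟩)
    (by rw [card_erase_of_mem hx, card_board, hSc])
  rwa [← this]

lemma insert_liftSet_board_erase {N t : ℕ} (hx : x ∈ board N) (ht : t ∈ board (N - 1)) :
    insert x (liftSet x ((board (N - 1)).erase t)) = (board N).erase (liftElt x t) := by
  ext r
  rw [mem_board] at hx ht
  simp only [mem_insert, mem_liftSet, mem_erase, mem_board, stdElt, liftElt]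
  split_ifs <;> omega

lemma exists_singleton_mem_of_wins (N : ℕ) (hH : IsFamilyOn N 1 H) :
    (BobWins N 1 H → ∃ s ≤ N / 2 + 1, {s} ∈ H) ∧
      (AliceWins N 1 H → ∃ s ≤ (N + 1) / 2, {s} ∈ H) := by
  induction N using Nat.strong_induction_on generalizing H with
  | _ N ih =>
  by_cases hN : N ≤ 1
  · suffices H.Nonempty → ∃ s ≤ 1, s ≤ N ∧ {s} ∈ H by
      rw [aliceWins_iff_nonempty (Or.inr hN), bobWins_iff_nonempty (Or.inr hN)]
      exact ⟨fun h => (this h).imp fun s hs => ⟨by omega, hs.2.2⟩,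
        fun h => (this h).imp fun s hs => ⟨by omega, hs.2.2⟩⟩
    rintro ⟨S, hS⟩
    obtain ⟨s, rfl⟩ := card_eq_one.1 (hH S hS).2
    have := mem_board.1 ((hH _ hS).1 (mem_singleton_self s))
    exact ⟨s, by omega, by omega, hS⟩
  have lift_eq {x s : ℕ} (h : s < x) (hs : {s} ∈ secMinus H x) : {s} ∈ H := by
    rwa [mem_secMinus_iff, liftSet_singleton, liftElt, if_pos h] at hs
  constructor
  · intro hB
    have hx : N / 2 + 1 ∈ board N := mem_board.2 (by omega)
    rcases (bobWins_iff one_pos (by omega)).1 hB _ hx with hA | hA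
    · rw [aliceWins_iff_nonempty (k := 1 - 1) (Or.inl rfl)] at hA
      exact ⟨_, le_rfl, singleton_mem_of_secPlus_nonempty hH hA⟩
    · obtain ⟨s, hs, hsH⟩ := (ih (N - 1) (by omega) (hH.secMinus hx)).2 hA
      exact ⟨s, by omega, lift_eq (by omega) hsH⟩
  · intro hA
    obtain ⟨y, hy, hplus, hminus⟩ := (aliceWins_iff one_pos (by omega)).1 hA
    rw [bobWins_iff_nonempty (k := 1 - 1) (Or.inl rfl)] at hplus
    by_cases hyN : y ≤ (N + 1) / 2
    · exact ⟨y, hyN, singleton_mem_of_secPlus_nonempty hH hplus⟩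
    · obtain ⟨s, hs, hsH⟩ := (ih (N - 1) (by omega) (hH.secMinus hy)).1 hminus
      exact ⟨s, by omega, lift_eq (by omega) hsH⟩

lemma exists_erase_mem_of_wins (N : ℕ) (hN : 1 ≤ N) (hH : IsFamilyOn N (N - 1) H) :
    (BobWins N (N - 1) H → ∃ t ∈ board N, (N + 1) / 2 ≤ t ∧ (board N).erase t ∈ H) ∧
      (AliceWins N (N - 1) H →
        ∃ t ∈ board N, N / 2 + 1 ≤ t ∧ (board N).erase t ∈ H) := by
  induction N using Nat.strong_induction_on generalizing H with
  | _ N ih =>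
  by_cases hN1 : N = 1
  · subst hN1
    suffices H.Nonempty → (board 1).erase 1 ∈ H by
      rw [aliceWins_iff_nonempty (Or.inl rfl), bobWins_iff_nonempty (Or.inl rfl)]
      exact ⟨fun h => ⟨1, mem_board.2 (by omega), le_rfl, this h⟩,
        fun h => ⟨1, mem_board.2 (by omega), le_rfl, this h⟩⟩
    rintro ⟨S, hS⟩
    rwa [card_eq_zero.1 (hH S hS).2] at hS
  have lift_mem {x t : ℕ} (hx : x ∈ board N) (ht : t ∈ board (N - 1))
      (h : (board (N - 1)).erase t ∈ secPlus H x) : (board N).erase (liftElt x t) ∈ H := by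
    rwa [mem_secPlus_iff, insert_liftSet_board_erase hx ht] at h
  have hterm : N - 1 = 0 ∨ N - 1 ≤ N - 1 := Or.inr le_rfl
  constructor
  · intro hB
    have hx : (N + 1) / 2 ∈ board N := mem_board.2 (by omega)
    rcases (bobWins_iff (by omega) (by omega)).1 hB _ hx with hA | hA
    · obtain ⟨t, ht, htN, htH⟩ := (ih (N - 1) (by omega) (by omega) (hH.secPlus hx)).2 hA
      refine ⟨_, liftElt_mem_board hx ht, ?_, lift_mem hx ht htH⟩
      unfold liftElt; split_ifs <;> omega
    · rw [aliceWins_iff_nonempty hterm] at hA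
      exact ⟨_, hx, le_rfl, erase_mem_of_secMinus_nonempty hH hx hA⟩
  · intro hA
    obtain ⟨y, hy, hplus, hminus⟩ := (aliceWins_iff (by omega) (by omega)).1 hA
    rw [bobWins_iff_nonempty hterm] at hminus
    by_cases hyN : N / 2 + 1 ≤ y
    · exact ⟨y, hy, hyN, erase_mem_of_secMinus_nonempty hH hy hminus⟩
    · obtain ⟨t, ht, htN, htH⟩ := (ih (N - 1) (by omega) (by omega) (hH.secPlus hy)).1 hplus
      refine ⟨_, liftElt_mem_board hy ht, ?_, lift_mem hy ht htH⟩
      unfold liftElt; split_ifs <;> omega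

end Extreme

def BobWinsCentralSections (m : ℕ) : Prop :=
  ∀ k F, IsUpFamily (2 * m + 1) k F → BobWins (2 * m + 1) k F →
    (k < 2 * m + 1 →
      ∀ x ∈ board (2 * m + 1), x ≤ m + 1 → BobWins (2 * m) k (secMinus F x)) ∧
    (0 < k →
      ∀ x ∈ board (2 * m + 1), m + 1 ≤ x → BobWins (2 * m) (k - 1) (secPlus F x))

def AliceWinsCentralSections (m : ℕ) : Prop :=
  ∀ k G, IsUpFamily (2 * m) k G → AliceWins (2 * m) k G →
    (k < 2 * m →
      ∀ x ∈ board (2 * m), x ≤ m + 1 → AliceWins (2 * m - 1) k (secMinus G x)) ∧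
    (0 < k →
      ∀ x ∈ board (2 * m), m ≤ x → AliceWins (2 * m - 1) (k - 1) (secPlus G x))

section CentralSections

variable {m k x : ℕ} {F G : Set (Finset ℕ)}

lemma aliceWins_of_bobWinsCentralSections (hO : BobWinsCentralSections m)
    (hF : IsUpFamily (2 * m + 1) k F) (hB : BobWins (2 * m + 1) k F) (hk : 0 < k)
    (hkn : k < 2 * m + 1) : AliceWins (2 * m + 1) k F := by
  have hcentre : m + 1 ∈ board (2 * m + 1) := mem_board.2 (by omega)
  have h := hO k F hF hB
  exact (aliceWins_iff hk hkn).2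
    ⟨m + 1, hcentre, h.2 hk _ hcentre le_rfl, h.1 hkn _ hcentre le_rfl⟩

lemma bobWins_secMinus_of_aliceWinsCentralSections (hE : AliceWinsCentralSections m)
    (hF : IsUpFamily (2 * m + 1) k F) (hB : BobWins (2 * m + 1) k F) (hk : 0 < k)
    (hkm : k < 2 * m) (hx : x ∈ board (2 * m + 1)) (hxm : x ≤ m + 1) :
    BobWins (2 * m) k (secMinus F x) := by
  rw [bobWins_iff hk hkm]
  intro z hz
  obtain ⟨y, hy, hyx, rfl⟩ := exists_stdElt_eq hx hz
  have hx' : stdElt y x ∈ board (2 * m) := stdElt_mem_board hy hx hyx.symm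
  have hxm' : stdElt y x ≤ m + 1 := by unfold stdElt; split_ifs <;> omega
  rw [secPlus_secMinus_comm hyx.symm, secMinus_secMinus_comm]
  exact ((bobWins_iff hk (by omega)).1 hB y hy).imp
    (fun hA => (hE _ _ (hF.secPlus hy) hA).1 (by omega) _ hx' hxm')
    (fun hA => (hE _ _ (hF.secMinus hy) hA).1 hkm _ hx' hxm')

lemma bobWins_secPlus_of_aliceWinsCentralSections (hE : AliceWinsCentralSections m)
    (hF : IsUpFamily (2 * m + 1) k F) (hB : BobWins (2 * m + 1) k F) (hk : 1 < k)
    (hkm : k ≤ 2 * m) (hx : x ∈ board (2 * m + 1)) (hxm : m + 1 ≤ x) :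
    BobWins (2 * m) (k - 1) (secPlus F x) := by
  rw [bobWins_iff (by omega) (by omega)]
  intro z hz
  obtain ⟨y, hy, hyx, rfl⟩ := exists_stdElt_eq hx hz
  have hx' : stdElt y x ∈ board (2 * m) := stdElt_mem_board hy hx hyx.symm
  have hxm' : m ≤ stdElt y x := by unfold stdElt; split_ifs <;> omega
  rw [secPlus_secPlus_comm hyx.symm, ← secPlus_secMinus_comm hyx]
  exact ((bobWins_iff (by omega) (by omega)).1 hB y hy).imp
    (fun hA => (hE _ _ (hF.secPlus hy) hA).2 (by omega) _ hx' hxm')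
    (fun hA => (hE _ _ (hF.secMinus hy) hA).2 (by omega) _ hx' hxm')

lemma aliceWins_secMinus_of_bobWinsCentralSections (hO : BobWinsCentralSections m)
    (hG : IsUpFamily (2 * m + 2) k G) (hA : AliceWins (2 * m + 2) k G) (hk : 0 < k)
    (hkm : k < 2 * m + 1) (hx : x ∈ board (2 * m + 2)) (hxm : x ≤ m + 2) :
    AliceWins (2 * m + 1) k (secMinus G x) := by
  obtain ⟨y, hy, hplus, hminus⟩ := (aliceWins_iff hk (by omega)).1 hA
  by_cases hcentre : x = y ∨ (x = m + 2 ∧ m + 2 < y)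
  · have hBx : BobWins (2 * m + 1) k (secMinus G x) := by
      rcases hcentre with rfl | ⟨rfl, hxy⟩
      · exact hminus
      · exact hminus.mono (hG.secMinus_subset hx hy hxy.le)
    exact aliceWins_of_bobWinsCentralSections hO (hG.secMinus hx) hBx hk hkm
  have hxy : x ≠ y := fun h => hcentre (.inl h)
  have hx' : stdElt y x ∈ board (2 * m + 1) := stdElt_mem_board hy hx hxy
  have hxm' : stdElt y x ≤ m + 1 := by unfold stdElt; split_ifs <;> omega
  refine (aliceWins_iff hk hkm).2 ⟨stdElt x y, stdElt_mem_board hx hy hxy.symm, ?_, ?_⟩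
  · rw [secPlus_secMinus_comm hxy]
    exact (hO _ _ (hG.secPlus hy) hplus).1 (by omega) _ hx' hxm'
  · rw [secMinus_secMinus_comm]
    exact (hO _ _ (hG.secMinus hy) hminus).1 hkm _ hx' hxm'

lemma aliceWins_secPlus_of_bobWinsCentralSections (hO : BobWinsCentralSections m)
    (hG : IsUpFamily (2 * m + 2) k G) (hA : AliceWins (2 * m + 2) k G) (hk : 1 < k)
    (hkm : k ≤ 2 * m + 1) (hx : x ∈ board (2 * m + 2)) (hxm : m + 1 ≤ x) :
    AliceWins (2 * m + 1) (k - 1) (secPlus G x) := by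
  obtain ⟨y, hy, hplus, hminus⟩ := (aliceWins_iff (by omega) (by omega)).1 hA
  by_cases hcentre : x = y ∨ (x = m + 1 ∧ y < m + 1)
  · have hBx : BobWins (2 * m + 1) (k - 1) (secPlus G x) := by
      rcases hcentre with rfl | ⟨rfl, hyx⟩
      · exact hplus
      · exact hplus.mono (hG.secPlus_subset hy hx hyx.le)
    exact aliceWins_of_bobWinsCentralSections hO (hG.secPlus hx) hBx (by omega) (by omega)
  have hxy : x ≠ y := fun h => hcentre (.inl h)
  have hx' : stdElt y x ∈ board (2 * m + 1) := stdElt_mem_board hy hx hxy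
  have hxm' : m + 1 ≤ stdElt y x := by unfold stdElt; split_ifs <;> omega
  refine (aliceWins_iff (by omega) (by omega)).2
    ⟨stdElt x y, stdElt_mem_board hx hy hxy.symm, ?_, ?_⟩
  · rw [secPlus_secPlus_comm hxy]
    exact (hO _ _ (hG.secPlus hy) hplus).2 (by omega) _ hx' hxm'
  · rw [← secPlus_secMinus_comm hxy.symm]
    exact (hO _ _ (hG.secMinus hy) hminus).2 (by omega) _ hx' hxm'

end CentralSections

lemma bobWinsCentralSections_of_aliceWinsCentralSections {m : ℕ}
    (hE : AliceWinsCentralSections m) : BobWinsCentralSections m := by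
  intro k F hF hB
  constructor
  · intro hkn x hx hxm
    obtain rfl | hk := k.eq_zero_or_pos
    · rw [bobWins_iff_nonempty (Or.inl rfl)] at hB ⊢
      exact secMinus_nonempty_of_card_zero hF.isFamilyOn hB
    obtain hkm | rfl : k < 2 * m ∨ k = 2 * m := by omega
    · exact bobWins_secMinus_of_aliceWinsCentralSections hE hF hB hk hkm hx hxm
    obtain ⟨t, ht, htm, htF⟩ := (exists_erase_mem_of_wins _ (by omega) hF.isFamilyOn).1 hB
    rw [bobWins_iff_nonempty (Or.inr le_rfl)]
    exact ⟨_, _, hF.erase_mem htF ht hx (by omega), notMem_erase x _, rfl⟩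
  · intro hk x hx hxm
    have hkle : k ≤ 2 * m + 1 := by
      by_contra! h
      exact h.not_ge (hF.isFamilyOn.le_of_nonempty ((bobWins_iff_nonempty (.inr h.le)).1 hB))
    obtain rfl | hkn : k = 2 * m + 1 ∨ k < 2 * m + 1 := by omega
    · rw [bobWins_iff_nonempty (Or.inr le_rfl)] at hB
      rw [bobWins_iff_nonempty (Or.inr (show 2 * m ≤ 2 * m + 1 - 1 by omega))]
      exact secPlus_nonempty_of_card_eq hF.isFamilyOn hB hx
    obtain rfl | hk1 : k = 1 ∨ 1 < k := by omega
    · obtain ⟨s, hsm, hsF⟩ := (exists_singleton_mem_of_wins _ hF.isFamilyOn).1 hB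
      rw [bobWins_iff_nonempty (Or.inl rfl)]
      exact ⟨_, _, hF.singleton_mem hsF hx (by omega), mem_singleton_self x, rfl⟩
    exact bobWins_secPlus_of_aliceWinsCentralSections hE hF hB hk1 (by omega) hx hxm

lemma aliceWinsCentralSections_zero : AliceWinsCentralSections 0 := by
  intro k G hG hA
  refine ⟨fun hk => absurd hk k.not_lt_zero, fun hk => ?_⟩
  have := hG.isFamilyOn.le_of_nonempty ((aliceWins_iff_nonempty (Or.inr k.zero_le)).1 hA)
  omega

lemma aliceWinsCentralSections_succ {m : ℕ} (hO : BobWinsCentralSections m) :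
    AliceWinsCentralSections (m + 1) := by
  intro k G hG hA
  rw [show 2 * (m + 1) = 2 * m + 2 by ring] at hG hA ⊢
  rw [show 2 * m + 2 - 1 = 2 * m + 1 by omega]
  constructor
  · intro hkn x hx hxm
    obtain rfl | hk := k.eq_zero_or_pos
    · rw [aliceWins_iff_nonempty (Or.inl rfl)] at hA ⊢
      exact secMinus_nonempty_of_card_zero hG.isFamilyOn hA
    obtain hkm | rfl : k < 2 * m + 1 ∨ k = 2 * m + 1 := by omega
    · exact aliceWins_secMinus_of_bobWinsCentralSections hO hG hA hk hkm hx hxm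
    obtain ⟨t, ht, htm, htG⟩ := (exists_erase_mem_of_wins _ (by omega) hG.isFamilyOn).2 hA
    rw [aliceWins_iff_nonempty (Or.inr le_rfl)]
    exact ⟨_, _, hG.erase_mem htG ht hx (by omega), notMem_erase x _, rfl⟩
  · intro hk x hx hxm
    have hkle : k ≤ 2 * m + 2 := by
      by_contra! h
      exact h.not_ge (hG.isFamilyOn.le_of_nonempty ((aliceWins_iff_nonempty (.inr h.le)).1 hA))
    obtain rfl | hkn : k = 2 * m + 2 ∨ k < 2 * m + 2 := by omega
    · rw [aliceWins_iff_nonempty (Or.inr le_rfl)] at hA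
      rw [aliceWins_iff_nonempty (Or.inr (show 2 * m + 1 ≤ 2 * m + 2 - 1 by omega))]
      exact secPlus_nonempty_of_card_eq hG.isFamilyOn hA hx
    obtain rfl | hk1 : k = 1 ∨ 1 < k := by omega
    · obtain ⟨s, hsm, hsG⟩ := (exists_singleton_mem_of_wins _ hG.isFamilyOn).2 hA
      rw [aliceWins_iff_nonempty (Or.inl rfl)]
      exact ⟨_, _, hG.singleton_mem hsG hx (by omega), mem_singleton_self x, rfl⟩
    exact aliceWins_secPlus_of_bobWinsCentralSections hO hG hA hk1 (by omega) hx hxm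

lemma bobWinsCentralSections (m : ℕ) : BobWinsCentralSections m := by
  induction m with
  | zero => exact bobWinsCentralSections_of_aliceWinsCentralSections aliceWinsCentralSections_zero
  | succ m ih =>
    exact bobWinsCentralSections_of_aliceWinsCentralSections (aliceWinsCentralSections_succ ih)

/-- on an odd board `[2m+1]`, if Bob wins his `F`-game for an
increasing family `F`, then Bob wins both his games on the sections at the
middle element `m+1`; equivalently, Alice wins her `F`-game by opening with
the middle element. -/
theorem central_move_odd (m k : ℕ) (hm : 1 ≤ m) (hk : 0 < k) (hkn : k < 2 * m + 1)
    (F : Set (Finset ℕ)) (hF : IsFamilyOn (2 * m + 1) k F)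
    (hinc : IsIncreasingFamily (2 * m + 1) k F)
    (hB : BobWins (2 * m + 1) k F) :
    BobWins (2 * m) (k - 1) (secPlus F (m + 1)) ∧
      BobWins (2 * m) k (secMinus F (m + 1)) := by
  have hcentre : m + 1 ∈ board (2 * m + 1) := mem_board.2 (by omega)
  have h := bobWinsCentralSections m k F (hinc.isUpFamily hF) hB
  exact ⟨h.2 hk _ hcentre le_rfl, h.1 hkn _ hcentre le_rfl⟩
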